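/- Fix a vote histogram H ∈ ℝ^c with c ≥ 1. Then as the noise scale σ tends to infinity, the output distribution of the noisy argmax mechanism tends to the uniform distribution on the c classes: for every class k, [Q_σ(H)]_k → 1/c as σ → ∞. -/

import Mathlib

open MeasureTheory ProbabilityTheory Filter

/-- `[Q_σ(H)]_k`: the probability that PATE's noisy argmax mechanism, which adds
i.i.d. `N(0, σ²)` noise to each coordinate of the vote histogram `H`, outputs class `k`. -/
noncomputable def noisyArgmaxProb (c : ℕ) (σ : ℝ) (H : Fin c → ℝ) (k : Fin c) : ℝ :=
  ((Measure.pi fun _ : Fin c => gaussianReal 0 ⟨σ ^ 2, sq_nonneg σ⟩)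
      {S | ∀ i, i ≠ k → H i + S i < H k + S k}).toReal

open Set Function Topology
open scoped ENNReal

/-!
Write the noise as `σ • x` with `x` standard Gaussian. Almost surely `x` has distinct
coordinates, and then for all large `σ` the vectors `H + σ • x` and `x` have the same strict
argmax, so by dominated convergence `[Q_σ(H)]_k` tends to the probability that `x k` is the
strict maximum of `x`. The coordinates of `x` are i.i.d., hence exchangeable, so these `c`
probabilities are equal; the events are disjoint and, ties being null, cover almost everything,
so each is `1 / c`.
-/

def strictArgmaxSet {ι α : Type*} [LT α] (k : ι) : Set (ι → α) :=
  {x | ∀ i, i ≠ k → x i < x k}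

section LinearOrder

variable {ι α : Type*} [LinearOrder α]

lemma comp_mem_strictArgmaxSet_iff (e : ι ≃ ι) (x : ι → α) (k : ι) :
    x ∘ e ∈ strictArgmaxSet k ↔ x ∈ strictArgmaxSet (e k) := by
  simp only [strictArgmaxSet, mem_ofPred_eq, comp_apply]
  exact e.forall_congr fun {i} => by simp [e.injective.ne_iff]

lemma pairwise_disjoint_strictArgmaxSet :
    Pairwise (Disjoint on (strictArgmaxSet : ι → Set (ι → α))) :=
  fun j k hjk => disjoint_left.2 fun _ hj hk => lt_asymm (hj k hjk.symm) (hk j hjk)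

lemma exists_mem_strictArgmaxSet [Finite ι] [Nonempty ι] {x : ι → α} (hx : Injective x) :
    ∃ k, x ∈ strictArgmaxSet k := by
  obtain ⟨k, hk⟩ := Finite.exists_max x
  exact ⟨k, fun i hik => (hk i).lt_of_ne (hx.ne hik)⟩

end LinearOrder

section Limit

variable {ι : Type*} [Finite ι]

lemma eventually_lt_mul_iff_pos (b : ℝ) {d : ℝ} (hd : d ≠ 0) :
    ∀ᶠ σ in atTop, (b < σ * d ↔ 0 < d) := by
  rcases hd.lt_or_gt with hneg | hpos
  · filter_upwards [(tendsto_id.atTop_mul_const_of_neg hneg).eventually_lt_atBot b] with σ hσ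
    exact iff_of_false hσ.not_gt hneg.not_gt
  · filter_upwards [(tendsto_id.atTop_mul_const hpos).eventually_gt_atTop b] with σ hσ
    exact iff_of_true hσ hpos

lemma eventually_add_smul_mem_strictArgmaxSet_iff (H : ι → ℝ) {x : ι → ℝ}
    (hx : Injective x) (k : ι) :
    ∀ᶠ σ : ℝ in atTop, (H + σ • x ∈ strictArgmaxSet k ↔ x ∈ strictArgmaxSet k) := by
  have hcoord : ∀ i, ∀ᶠ σ : ℝ in atTop,
      i ≠ k → (H i + σ * x i < H k + σ * x k ↔ x i < x k) := by
    intro i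
    by_cases hik : i = k
    · exact .of_forall fun _ h => absurd hik h
    · filter_upwards [eventually_lt_mul_iff_pos (H i - H k) (sub_ne_zero.2 (hx.ne hik).symm)]
        with σ hσ _
      rw [← hσ.trans sub_pos]
      constructor <;> intro h <;> linarith
  filter_upwards [eventually_all.2 hcoord] with σ hσ
  exact forall_congr' fun i => imp_congr_right fun hik => hσ i hik

end Limit

lemma measurableSet_strictArgmaxSet {ι : Type*} [Countable ι] (k : ι) :
    MeasurableSet (strictArgmaxSet k : Set (ι → ℝ)) := by
  simp only [strictArgmaxSet, ofPred_forall]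
  exact .iInter fun i => .iInter fun _ =>
    measurableSet_lt (measurable_pi_apply i) (measurable_pi_apply k)

section Measure

variable {ι : Type*} [Fintype ι] (μ : Measure ℝ)

lemma pi_setOf_eq_eq_zero [SigmaFinite μ] [NullSingletonClass μ] {i j : ι} (hij : i ≠ j) :
    Measure.pi (fun _ : ι => μ) {x | x i = x j} = 0 := by
  classical
  have hφ := measurePreserving_piEquivPiSubtypeProd (fun _ : ι => μ) (· ≠ j)
  have hs : MeasurableSet {p : ({l // l ≠ j} → ℝ) × ({l // ¬l ≠ j} → ℝ) |
      p.2 ⟨j, not_not.2 rfl⟩ = p.1 ⟨i, hij⟩} :=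
    measurableSet_eq_fun (measurable_snd.eval) (measurable_fst.eval)
  have hpre : {x : ι → ℝ | x i = x j} =
      MeasurableEquiv.piEquivPiSubtypeProd (fun _ => ℝ) (· ≠ j) ⁻¹'
        {p | p.2 ⟨j, not_not.2 rfl⟩ = p.1 ⟨i, hij⟩} := by
    ext x
    simp [eq_comm]
  rw [hpre, hφ.measure_preimage hs.nullMeasurableSet, Measure.measure_prod_null hs]
  exact .of_forall fun y => Measure.pi_hyperplane _ _ _

lemma ae_injective_pi [SigmaFinite μ] [NullSingletonClass μ] :
    ∀ᵐ x ∂Measure.pi (fun _ : ι => μ), Injective x := by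
  have : ∀ i j : ι, ∀ᵐ x ∂Measure.pi (fun _ : ι => μ), x i = x j → i = j := by
    intro i j
    by_cases hij : i = j
    · exact .of_forall fun _ _ => hij
    · filter_upwards [measure_eq_zero_iff_ae_notMem.1 (pi_setOf_eq_eq_zero μ hij)] with x hx
      exact fun h => absurd h hx
  simpa only [Injective, ae_all_iff] using fun i j => this i j

lemma pi_strictArgmaxSet_comp_equiv [SigmaFinite μ] (e : ι ≃ ι) (k : ι) :
    Measure.pi (fun _ : ι => μ) (strictArgmaxSet (e k)) =
      Measure.pi (fun _ : ι => μ) (strictArgmaxSet k) := by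
  have hφ := measurePreserving_piCongrLeft (fun _ : ι => μ) e
  have hpre : MeasurableEquiv.piCongrLeft (fun _ => ℝ) e ⁻¹' strictArgmaxSet (e k) =
      strictArgmaxSet k := by
    ext x
    have hcomp : MeasurableEquiv.piCongrLeft (fun _ => ℝ) e x ∘ e = x :=
      funext (Equiv.piCongrLeft_apply_apply (fun _ => ℝ) e x)
    rw [mem_preimage, ← comp_mem_strictArgmaxSet_iff, hcomp]
  rw [← hpre, hφ.measure_preimage (measurableSet_strictArgmaxSet _).nullMeasurableSet]

lemma pi_strictArgmaxSet [IsProbabilityMeasure μ] [NullSingletonClass μ] (k : ι) :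
    Measure.pi (fun _ : ι => μ) (strictArgmaxSet k) = (Fintype.card ι : ℝ≥0∞)⁻¹ := by
  classical
  have : Nonempty ι := ⟨k⟩
  set P := Measure.pi (fun _ : ι => μ)
  have hcover : P (⋃ j, strictArgmaxSet j) = 1 := by
    rw [← measure_univ (μ := P)]
    refine measure_congr (eventuallyEq_univ.2 ?_)
    filter_upwards [ae_injective_pi μ] with x hx
    exact mem_iUnion.2 (exists_mem_strictArgmaxSet hx)
  have hsum : (Fintype.card ι : ℝ≥0∞) * P (strictArgmaxSet k) = 1 := by
    rw [← hcover, measure_iUnion pairwise_disjoint_strictArgmaxSet measurableSet_strictArgmaxSet,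
      tsum_fintype, ← Finset.card_univ, ← nsmul_eq_mul, ← Finset.sum_const]
    exact Finset.sum_congr rfl fun j _ => by
      simpa using (pi_strictArgmaxSet_comp_equiv μ (Equiv.swap k j) k).symm
  exact ENNReal.eq_inv_of_mul_eq_one_left (by rwa [mul_comm] at hsum)

lemma tendsto_pi_add_smul_mem_strictArgmaxSet [IsFiniteMeasure μ] [NullSingletonClass μ]
    (H : ι → ℝ) (k : ι) :
    Tendsto (fun σ : ℝ => Measure.pi (fun _ : ι => μ) {x | H + σ • x ∈ strictArgmaxSet k})
      atTop (𝓝 (Measure.pi (fun _ : ι => μ) (strictArgmaxSet k))) := by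
  refine tendsto_measure_of_ae_tendsto_indicator_of_isFiniteMeasure _
    (measurableSet_strictArgmaxSet k) (fun σ => ?_) ?_
  · exact (measurableSet_strictArgmaxSet k).preimage
      (measurable_const.add (measurable_id.const_smul σ))
  · filter_upwards [ae_injective_pi μ] with x hx
    exact eventually_add_smul_mem_strictArgmaxSet_iff H hx k

end Measure

lemma measurePreserving_const_mul_gaussianReal (σ : ℝ) :
    MeasurePreserving (σ * ·) (gaussianReal 0 1) (gaussianReal 0 ⟨σ ^ 2, sq_nonneg σ⟩) := by
  refine ⟨measurable_const_mul σ, ?_⟩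
  have h := gaussianReal_map_const_mul (μ := 0) (v := 1) σ
  simp only [mul_zero, mul_one] at h
  exact h

lemma noisyArgmaxProb_eq {c : ℕ} (σ : ℝ) (H : Fin c → ℝ) (k : Fin c) :
    noisyArgmaxProb c σ H k =
      (Measure.pi (fun _ : Fin c => gaussianReal 0 1)
        {x | H + σ • x ∈ strictArgmaxSet k}).toReal := by
  -- instance search does not see through the anonymous constructor of the variance
  have : IsProbabilityMeasure (gaussianReal 0 ⟨σ ^ 2, sq_nonneg σ⟩) :=
    instIsProbabilityMeasureGaussianReal _ _
  have hφ := measurePreserving_pi _ _ fun _ : Fin c => measurePreserving_const_mul_gaussianReal σ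
  have hs : MeasurableSet {S : Fin c → ℝ | H + S ∈ strictArgmaxSet k} :=
    (measurableSet_strictArgmaxSet k).preimage (measurable_const.add measurable_id)
  exact congrArg ENNReal.toReal (hφ.measure_preimage hs.nullMeasurableSet).symm

theorem noisyArgmaxProb_tendsto_uniform_general
    (c : ℕ) (H : Fin c → ℝ) (k : Fin c) :
    Tendsto (fun σ : ℝ => noisyArgmaxProb c σ H k) atTop (nhds (1 / (c : ℝ))) := by
  have := nullSingletonClass_gaussianReal (μ := 0) one_ne_zero
  have hlim := tendsto_pi_add_smul_mem_strictArgmaxSet (gaussianReal 0 1) H k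
  rw [pi_strictArgmaxSet, Fintype.card_fin] at hlim
  simp_rw [noisyArgmaxProb_eq]
  rw [one_div, ← ENNReal.toReal_natCast, ← ENNReal.toReal_inv]
  exact (ENNReal.tendsto_toReal (by simpa using k.pos.ne')).comp hlim

/-- As the noise scale `σ → ∞`, the output distribution of the noisy
argmax mechanism on a fixed histogram `H ∈ ℝ^c` tends to the uniform distribution:
for every class `k`, `[Q_σ(H)]_k → 1/c`. -/
theorem noisyArgmaxProb_tendsto_uniform
    (c : ℕ) (hc : 1 ≤ c) (H : Fin c → ℝ) (k : Fin c) :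
    Tendsto (fun σ : ℝ => noisyArgmaxProb c σ H k) atTop (nhds (1 / (c : ℝ))) :=
  noisyArgmaxProb_tendsto_uniform_general c H k
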